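/- arXiv:quant-ph/0503012 — 4 statements merged into one kernel-verified Lean document; each statement's English description precedes it below -/
import Mathlib

section
/- Let ψ₁, ψ₂ be unit vectors in a complex inner product space with real inner product ⟨ψ₁,ψ₂⟩ = cos θ ∈ (0,1). Then the four vectors e₁ = (ψ₁⊗ψ₁ + ψ₂⊗ψ₂)/(√2·n₊), e₂ = (ψ₁⊗ψ₁ − ψ₂⊗ψ₂)/(√2·n₋), e₃ = (ψ̄₁⊗ψ̄₂ + ψ̄₂⊗ψ̄₁)/(√2·n₊), e₄ = (ψ̄₁⊗ψ̄₂ − ψ̄₂⊗ψ̄₁)/(√2·n₋), where n± = √(1 ± cos²θ), form an orthonormal system. -/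
/-!
The vectors `x = ψ₁ ⊗ ψ₁`, `y = ψ₂ ⊗ ψ₂` are unit vectors with real overlap `c²`, and so are
`x' = ψ̄₁ ⊗ ψ̄₂`, `y' = ψ̄₂ ⊗ ψ̄₁`. For unit vectors with real overlap `a`, the sum and the
difference are orthogonal, of norms `√(2(1 + a))` and `√(2(1 - a))`; this gives the pairs
`e₁, e₂` and `e₃, e₄`. The two pairs are orthogonal to each other because every inner product
`⟪ψᵢ ⊗ ψᵢ, ψ̄ⱼ ⊗ ψ̄ₖ⟫ = ⟪ψᵢ, ψ̄ⱼ⟫ ⟪ψᵢ, ψ̄ₖ⟫` has a factor `⟪ψᵢ, ψ̄ᵢ⟫ = 0`.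
-/

/-- The elementary tensor `v ⊗ w` of two vectors of `ℂ^n`, realized in
`ℂ^(n × n)` (with the standard inner product, this realizes `H ⊗ H`). -/
noncomputable def kron {n : ℕ} (v w : EuclideanSpace ℂ (Fin n)) :
    EuclideanSpace ℂ (Fin n × Fin n) :=
  (WithLp.equiv 2 _).symm fun p => v p.1 * w p.2

open scoped InnerProductSpace

section NormalizedSumDifference

variable {𝕜 E : Type*} [RCLike 𝕜] [NormedAddCommGroup E] [InnerProductSpace 𝕜 E]
  {x y : E} {a : ℝ}

lemma norm_add_eq_of_inner_eq_ofReal (hx : ‖x‖ = 1) (hy : ‖y‖ = 1) (hxy : ⟪x, y⟫_𝕜 = a) :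
    ‖x + y‖ = √2 * √(1 + a) := by
  rw [← Real.sqrt_mul zero_le_two, ← Real.sqrt_sq (norm_nonneg _), norm_add_sq (𝕜 := 𝕜), hx, hy,
    hxy, RCLike.ofReal_re]
  ring_nf

lemma norm_sub_eq_of_inner_eq_ofReal (hx : ‖x‖ = 1) (hy : ‖y‖ = 1) (hxy : ⟪x, y⟫_𝕜 = a) :
    ‖x - y‖ = √2 * √(1 - a) := by
  rw [← Real.sqrt_mul zero_le_two, ← Real.sqrt_sq (norm_nonneg _), norm_sub_sq (𝕜 := 𝕜), hx, hy,
    hxy, RCLike.ofReal_re]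
  ring_nf

lemma inner_add_sub_eq_zero_of_inner_eq_ofReal (h : ‖x‖ = ‖y‖) (hxy : ⟪x, y⟫_𝕜 = a) :
    ⟪x + y, x - y⟫_𝕜 = 0 := by
  have hyx : ⟪y, x⟫_𝕜 = a := by rw [← inner_conj_symm, hxy, RCLike.conj_ofReal]
  rw [inner_add_left, inner_sub_right, inner_sub_right, inner_self_eq_norm_sq_to_K,
    inner_self_eq_norm_sq_to_K (𝕜 := 𝕜) y, h, hxy, hyx]
  ring

lemma orthonormal_normalize_of_inner_eq_zero {u v : E} (hu : u ≠ 0) (hv : v ≠ 0)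
    (huv : ⟪u, v⟫_𝕜 = 0) : Orthonormal 𝕜 ![(‖u‖ : 𝕜)⁻¹ • u, (‖v‖ : 𝕜)⁻¹ • v] := by
  rw [orthonormal_vecCons_iff, orthonormal_vecCons_iff]
  refine ⟨norm_smul_inv_norm hu, Fin.forall_fin_one.2 ?_, norm_smul_inv_norm hv, by simp,
    .of_isEmpty _⟩
  rw [Matrix.cons_val_zero, inner_smul_left, inner_smul_right, huv, mul_zero, mul_zero]

lemma orthonormal_normalized_add_sub (hx : ‖x‖ = 1) (hy : ‖y‖ = 1) (hxy : ⟪x, y⟫_𝕜 = a)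
    (ha : |a| < 1) :
    Orthonormal 𝕜
      ![((√2 * √(1 + a) : ℝ) : 𝕜)⁻¹ • (x + y), ((√2 * √(1 - a) : ℝ) : 𝕜)⁻¹ • (x - y)] := by
  obtain ⟨ha₁, ha₂⟩ := abs_lt.1 ha
  have hadd := norm_add_eq_of_inner_eq_ofReal hx hy hxy
  have hsub := norm_sub_eq_of_inner_eq_ofReal hx hy hxy
  have hadd₀ : x + y ≠ 0 := by
    rw [← norm_ne_zero_iff, hadd]
    have : 0 < 1 + a := by linarith
    positivity
  have hsub₀ : x - y ≠ 0 := by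
    rw [← norm_ne_zero_iff, hsub]
    have : 0 < 1 - a := by linarith
    positivity
  rw [← hadd, ← hsub]
  exact orthonormal_normalize_of_inner_eq_zero hadd₀ hsub₀
    (inner_add_sub_eq_zero_of_inner_eq_ofReal (hx.trans hy.symm) hxy)

lemma orthonormal_vecCons₄_of_isOrtho {u₁ u₂ w₁ w₂ : E} (hu : Orthonormal 𝕜 ![u₁, u₂])
    (hw : Orthonormal 𝕜 ![w₁, w₂]) {U V : Submodule 𝕜 E} (hUV : U ⟂ V) (hu₁ : u₁ ∈ U)
    (hu₂ : u₂ ∈ U) (hw₁ : w₁ ∈ V) (hw₂ : w₂ ∈ V) : Orthonormal 𝕜 ![u₁, u₂, w₁, w₂] := by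
  simp only [orthonormal_vecCons_iff, Fin.forall_fin_succ, IsEmpty.forall_iff,
    Matrix.cons_val_zero, Matrix.cons_val_succ] at hu hw ⊢
  simp [hu, hw, hUV.inner_eq hu₁ hw₁, hUV.inner_eq hu₁ hw₂, hUV.inner_eq hu₂ hw₁,
    hUV.inner_eq hu₂ hw₂]

end NormalizedSumDifference

lemma inner_kron {n : ℕ} (v w v' w' : EuclideanSpace ℂ (Fin n)) :
    ⟪kron v w, kron v' w'⟫_ℂ = ⟪v, v'⟫_ℂ * ⟪w, w'⟫_ℂ := by
  simp only [kron, PiLp.inner_apply, RCLike.inner_apply, WithLp.equiv_symm_apply, map_mul,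
    Fintype.sum_prod_type, Finset.sum_mul, Finset.mul_sum]
  rw [Finset.sum_comm]
  congr 1; ext i; congr 1; ext j; ring

lemma norm_kron {n : ℕ} (v w : EuclideanSpace ℂ (Fin n)) : ‖kron v w‖ = ‖v‖ * ‖w‖ := by
  rw [norm_eq_sqrt_re_inner (𝕜 := ℂ), inner_kron, inner_self_eq_norm_sq_to_K,
    inner_self_eq_norm_sq_to_K, ← mul_pow]
  norm_cast
  exact Real.sqrt_sq (by positivity)

theorem orthonormal_basis_of_comparison_general {n : ℕ}
    (ψ₁ ψ₂ ψb₁ ψb₂ : EuclideanSpace ℂ (Fin n)) (c : ℝ)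
    (hc0 : 0 < c) (hc1 : c < 1)
    (h₁ : ‖ψ₁‖ = 1) (h₂ : ‖ψ₂‖ = 1) (hb₁ : ‖ψb₁‖ = 1) (hb₂ : ‖ψb₂‖ = 1)
    (hol : (inner ℂ ψ₁ ψ₂ : ℂ) = (c : ℂ))
    (hperp₁ : (inner ℂ ψb₁ ψ₁ : ℂ) = 0) (hperp₂ : (inner ℂ ψb₂ ψ₂ : ℂ) = 0)
    (holb : (inner ℂ ψb₁ ψb₂ : ℂ) = (c : ℂ)) :
    Orthonormal ℂ
      ![((Real.sqrt 2 * Real.sqrt (1 + c ^ 2) : ℝ) : ℂ)⁻¹ •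
          (kron ψ₁ ψ₁ + kron ψ₂ ψ₂),
        ((Real.sqrt 2 * Real.sqrt (1 - c ^ 2) : ℝ) : ℂ)⁻¹ •
          (kron ψ₁ ψ₁ - kron ψ₂ ψ₂),
        ((Real.sqrt 2 * Real.sqrt (1 + c ^ 2) : ℝ) : ℂ)⁻¹ •
          (kron ψb₁ ψb₂ + kron ψb₂ ψb₁),
        ((Real.sqrt 2 * Real.sqrt (1 - c ^ 2) : ℝ) : ℂ)⁻¹ •
          (kron ψb₁ ψb₂ - kron ψb₂ ψb₁)] := by
  have hc2 : |c ^ 2| < 1 := by rw [abs_of_nonneg (sq_nonneg c)]; nlinarith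
  have hxy : ⟪kron ψ₁ ψ₁, kron ψ₂ ψ₂⟫_ℂ = ((c ^ 2 : ℝ) : ℂ) := by
    rw [inner_kron, hol]; push_cast; ring
  have hxy' : ⟪kron ψb₁ ψb₂, kron ψb₂ ψb₁⟫_ℂ = ((c ^ 2 : ℝ) : ℂ) := by
    rw [inner_kron, holb, ← inner_conj_symm, holb, Complex.conj_ofReal]; push_cast; ring
  have hortho : Submodule.span ℂ {kron ψ₁ ψ₁, kron ψ₂ ψ₂} ⟂
      Submodule.span ℂ {kron ψb₁ ψb₂, kron ψb₂ ψb₁} := by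
    simp [Submodule.isOrtho_span, inner_kron, inner_eq_zero_symm.1 hperp₁,
      inner_eq_zero_symm.1 hperp₂]
  refine orthonormal_vecCons₄_of_isOrtho
    (orthonormal_normalized_add_sub (by rw [norm_kron, h₁, one_mul])
      (by rw [norm_kron, h₂, one_mul]) hxy hc2)
    (orthonormal_normalized_add_sub (by rw [norm_kron, hb₁, hb₂, one_mul])
      (by rw [norm_kron, hb₁, hb₂, one_mul]) hxy' hc2) hortho ?_ ?_ ?_ ?_
  all_goals
    refine Submodule.smul_mem _ _ ?_
    first | apply add_mem | apply sub_mem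
    all_goals exact Submodule.subset_span (by simp)

/-- With `ψ₁, ψ₂` unit vectors with real overlap `cos θ = c ∈ (0,1)`, and `ψ̄₁, ψ̄₂`
unit vectors in their span orthogonal to `ψ₁` resp. `ψ₂` with `⟨ψ̄₁,ψ̄₂⟩ = c`, the
four vectors `e₁, e₂, e₃, e₄` form an orthonormal system in `H ⊗ H`. -/
theorem orthonormal_basis_of_comparison {n : ℕ}
    (ψ₁ ψ₂ ψb₁ ψb₂ : EuclideanSpace ℂ (Fin n)) (c : ℝ)
    (hc0 : 0 < c) (hc1 : c < 1)
    (h₁ : ‖ψ₁‖ = 1) (h₂ : ‖ψ₂‖ = 1) (hb₁ : ‖ψb₁‖ = 1) (hb₂ : ‖ψb₂‖ = 1)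
    (hol : (inner ℂ ψ₁ ψ₂ : ℂ) = (c : ℂ))
    (hspan₁ : ψb₁ ∈ Submodule.span ℂ {ψ₁, ψ₂})
    (hspan₂ : ψb₂ ∈ Submodule.span ℂ {ψ₁, ψ₂})
    (hperp₁ : (inner ℂ ψb₁ ψ₁ : ℂ) = 0) (hperp₂ : (inner ℂ ψb₂ ψ₂ : ℂ) = 0)
    (holb : (inner ℂ ψb₁ ψb₂ : ℂ) = (c : ℂ))
    (hreal₁ : ∃ r : ℝ, (inner ℂ ψ₁ ψb₂ : ℂ) = (r : ℂ))
    (hreal₂ : ∃ r : ℝ, (inner ℂ ψ₂ ψb₁ : ℂ) = (r : ℂ)) :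
    Orthonormal ℂ
      ![((Real.sqrt 2 * Real.sqrt (1 + c ^ 2) : ℝ) : ℂ)⁻¹ •
          (kron ψ₁ ψ₁ + kron ψ₂ ψ₂),
        ((Real.sqrt 2 * Real.sqrt (1 - c ^ 2) : ℝ) : ℂ)⁻¹ •
          (kron ψ₁ ψ₁ - kron ψ₂ ψ₂),
        ((Real.sqrt 2 * Real.sqrt (1 + c ^ 2) : ℝ) : ℂ)⁻¹ •
          (kron ψb₁ ψb₂ + kron ψb₂ ψb₁),
        ((Real.sqrt 2 * Real.sqrt (1 - c ^ 2) : ℝ) : ℂ)⁻¹ •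
          (kron ψb₁ ψb₂ - kron ψb₂ ψb₁)] :=
  orthonormal_basis_of_comparison_general ψ₁ ψ₂ ψb₁ ψb₂ c hc0 hc1 h₁ h₂ hb₁ hb₂ hol hperp₁ hperp₂
    holb
end

section
/- For q₁, q₂ > 0 with q₁ + q₂ = 1 and cos θ ∈ (0,1), the optimal comparison success probability P_opt (equal to 1 − 2√(η_aη_b)·cos θ if cos θ < √(η_a/η_b)·(1 − √((η_a−η_b)/η_a)), and (n₋²/n₊²)·(1 − (η_b/2)·sin²θ) otherwise, where η_a = q₁²+q₂², η_b = 2q₁q₂, n±² = 1 ± cos²θ) is greater than or equal to the separable success probability P_sep (equal to (1 − 2√(q₁q₂)·cos θ)² if cos θ < √((1−q_max)/q_max), and q_max²·sin⁴θ otherwise, where q_max = max(q₁,q₂)). -/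
set_option maxHeartbeats 1000000 in
/-- The optimal (coherent) success probability of state comparison "two out of two"
is always at least the success probability of the optimal separable strategy. -/
theorem optimal_ge_separable (q₁ q₂ c : ℝ) (h₁ : 0 < q₁) (h₂ : 0 < q₂)
    (hsum : q₁ + q₂ = 1) (hc0 : 0 < c) (hc1 : c < 1) :
    (if c < Real.sqrt ((q₁ ^ 2 + q₂ ^ 2) / (2 * q₁ * q₂)) *
          (1 - Real.sqrt (((q₁ ^ 2 + q₂ ^ 2) - 2 * q₁ * q₂) / (q₁ ^ 2 + q₂ ^ 2)))
      then 1 - 2 * Real.sqrt ((q₁ ^ 2 + q₂ ^ 2) * (2 * q₁ * q₂)) * c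
      else ((1 - c ^ 2) / (1 + c ^ 2)) *
        (1 - (2 * q₁ * q₂) / 2 * (1 - c ^ 2))) ≥
    (if c < Real.sqrt ((1 - max q₁ q₂) / max q₁ q₂)
      then (1 - 2 * Real.sqrt (q₁ * q₂) * c) ^ 2
      else (max q₁ q₂) ^ 2 * (1 - c ^ 2) ^ 2) := by
  have ht : 0 < q₁ * q₂ := mul_pos h₁ h₂
  set u := Real.sqrt (q₁ * q₂) with hu_def
  set q := max q₁ q₂ with hq_def
  have hu0 : 0 < u := Real.sqrt_pos.2 ht
  have hu2 : u ^ 2 = q₁ * q₂ := Real.sq_sqrt ht.le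
  have hsq1 : (q₁ + q₂) ^ 2 = 1 := by rw [hsum]; norm_num
  have hu : u ≤ 1/2 := by
    nlinarith only [hu2, hsq1, hu0, sq_nonneg (q₁ - q₂)]
  have hq12 : 1/2 ≤ q := by
    have h3 := le_max_left q₁ q₂; have h4 := le_max_right q₁ q₂
    rw [← hq_def] at h3 h4; linarith only [h3, h4, hsum]
  have hq1 : q < 1 := max_lt (by linarith only [hsum, h₂]) (by linarith only [hsum, h₁])
  have hq0 : 0 < q := by linarith only [hq12]
  have h1q : 0 < 1 - q := by linarith only [hq1]
  have hqm : q₁ * q₂ = q * (1 - q) := by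
    rcases le_total q₁ q₂ with h | h
    · rw [hq_def, max_eq_right h]; linear_combination q₂ * hsum
    · rw [hq_def, max_eq_left h]; linear_combination q₁ * hsum
  have hu2q : u ^ 2 = q * (1 - q) := hu2.trans hqm
  have e1 : q₁ ^ 2 + q₂ ^ 2 = 1 - 2 * u ^ 2 := by
    rw [hu2]; linear_combination (q₁ + q₂ + 1) * hsum
  have e2 : 2 * q₁ * q₂ = 2 * u ^ 2 := by rw [hu2]; ring
  rw [e1, e2]
  have h12u2 : (0:ℝ) < 1 - 2 * u ^ 2 := by nlinarith only [hu, hu0]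
  have h14u2 : (0:ℝ) ≤ 1 - 4 * u ^ 2 := by nlinarith only [hu, hu0]
  have hs0 : (0:ℝ) ≤ 1 - c ^ 2 := by nlinarith only [hc0, hc1]
  have h1p : (0:ℝ) < 1 + c ^ 2 := by positivity
  have huc1 : u * c < u := by nlinarith only [hc1, hu0]
  have h2uc : (0:ℝ) ≤ 1 - 2 * u * c := by linarith only [huc1, hu]
  -- L1 ≥ R1
  set w := Real.sqrt ((1 - 2 * u ^ 2) * (2 * u ^ 2)) with hw_def
  have hw0 : 0 ≤ w := Real.sqrt_nonneg _
  have hw2 : w ^ 2 = (1 - 2 * u ^ 2) * (2 * u ^ 2) := Real.sq_sqrt (by positivity)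
  have h1uc : (0:ℝ) < 1 - u * c := by linarith only [huc1, hu]
  have hX0 : (0:ℝ) < 2 * u * (1 - u * c) :=
    mul_pos (by linarith only [hu0]) h1uc
  have hkey : w ≤ 2 * u * (1 - u * c) := by
    refine le_of_pow_le_pow_left₀ two_ne_zero hX0.le ?_
    rw [hw2]
    nlinarith only [mul_nonneg (mul_nonneg (sq_nonneg u)
        (by linarith only [huc1] : (0:ℝ) ≤ u - u * c))
        (by linarith only [huc1, hu] : (0:ℝ) ≤ 2 - u - u * c),
      mul_nonneg (sq_nonneg u) (sq_nonneg (1 - 2 * u))]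
  have hL1R1 : (1 - 2 * u * c) ^ 2 ≤ 1 - 2 * w * c := by
    nlinarith only [mul_nonneg hc0.le (sub_nonneg.2 hkey)]
  -- R1 ≥ R2
  have e7 : u ^ 2 * c ^ 2 = q * (1 - q) * c ^ 2 := by rw [hu2q]
  have hsum2 : (0:ℝ) < 2 * u * c + q * c ^ 2 + (1 - q) := by
    nlinarith only [mul_pos hu0 hc0, mul_nonneg hq0.le (sq_nonneg c), h1q]
  have f1 : (0:ℝ) ≤ 1 - 2 * u * c - q * (1 - c ^ 2) := by
    nlinarith only [sq_nonneg (q * c ^ 2 - (1 - q)), e7, hsum2]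
  have f2 : (0:ℝ) ≤ 1 - 2 * u * c + q * (1 - c ^ 2) := by
    nlinarith only [mul_nonneg hq0.le hs0, h2uc]
  have hR1R2 : q ^ 2 * (1 - c ^ 2) ^ 2 ≤ (1 - 2 * u * c) ^ 2 := by
    nlinarith only [mul_nonneg f1 f2]
  split_ifs with hL hR hR
  · linarith only [hL1R1]
  · linarith only [hL1R1, hR1R2]
  · -- hard case: L2 ≥ R1
    push_neg at hL
    have hRs : Real.sqrt ((1 - q) / q) = (1 - q) / u := by
      have h5 : ((1 - q) / u) ^ 2 = (1 - q) / q := by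
        rw [div_pow, hu2q, div_eq_div_iff (by positivity : (0:ℝ) < q * (1 - q)).ne' hq0.ne']; ring
      rw [← h5, Real.sqrt_sq (div_nonneg h1q.le hu0.le)]
    rw [hRs] at hR
    have huc : c * u < 1 - q := (lt_div_iff₀ hu0).1 hR
    have hr2 : (2 * q - 1) ^ 2 = 1 - 4 * u ^ 2 := by linear_combination 4 * hu2q
    have hrlt : 2 * q - 1 < 1 - 2 * (u * c) := by nlinarith only [huc]
    have hsq : (2 * q - 1) ^ 2 < (1 - 2 * (u * c)) ^ 2 :=
      pow_lt_pow_left₀ hrlt (by linarith only [hq12]) two_ne_zero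
    have hII : c < u * (1 + c ^ 2) := by nlinarith only [hsq, hr2, hu0]
    -- hI
    set A := Real.sqrt ((1 - 2 * u ^ 2) / (2 * u ^ 2)) with hA_def
    set B := Real.sqrt ((1 - 2 * u ^ 2 - 2 * u ^ 2) / (1 - 2 * u ^ 2)) with hB_def
    set D := Real.sqrt ((1 - 4 * u ^ 2) / (2 * u ^ 2)) with hD_def
    have hA0 : 0 ≤ A := Real.sqrt_nonneg _
    have hD0 : 0 ≤ D := Real.sqrt_nonneg _
    have hA2 : A ^ 2 = (1 - 2 * u ^ 2) / (2 * u ^ 2) := Real.sq_sqrt (by positivity)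
    have hD2 : D ^ 2 = (1 - 4 * u ^ 2) / (2 * u ^ 2) := Real.sq_sqrt (by positivity)
    have hABD : A * B = D := by
      rw [hA_def, hB_def, hD_def, ← Real.sqrt_mul (by positivity)]
      congr 1
      rw [div_mul_div_comm, div_eq_div_iff (by positivity : (0:ℝ) < 2 * u ^ 2 * (1 - 2 * u ^ 2)).ne' (by positivity : (0:ℝ) < 2 * u ^ 2).ne']
      ring
    have hAcD : A ≤ c + D := by
      have h6 : A - A * B ≤ c := by
        have h7 := hL
        rw [mul_one_sub] at h7
        linarith only [h7]
      rw [hABD] at h6; linarith only [h6]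
    have hAD1 : A ^ 2 - D ^ 2 = 1 := by
      rw [hA2, hD2, div_sub_div_same, div_eq_one_iff_eq (by positivity)]; ring
    have h2cD : 1 - c ^ 2 ≤ 2 * c * D := by
      nlinarith only [pow_le_pow_left₀ hA0 hAcD 2, hAD1]
    have hsq2 : (1 - c ^ 2) ^ 2 ≤ (2 * c * D) ^ 2 := pow_le_pow_left₀ hs0 h2cD 2
    have hD2' : (2 * u ^ 2) * D ^ 2 = 1 - 4 * u ^ 2 := by
      rw [hD2, mul_div_cancel₀]; positivity
    have hD2'' : 2 * c ^ 2 * ((2 * u ^ 2) * D ^ 2) = 2 * c ^ 2 * (1 - 4 * u ^ 2) := by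
      rw [hD2']
    have hI : u ^ 2 * (1 - c ^ 2) ^ 2 ≤ 2 * c ^ 2 * (1 - 4 * u ^ 2) := by
      nlinarith only [mul_le_mul_of_nonneg_left hsq2 (sq_nonneg u), hD2'']
    -- main chain
    have ha : (1 - 2 * u * c) * (1 + c ^ 2) ≤ 1 - c ^ 2 := by
      nlinarith only [mul_le_mul_of_nonneg_left hII.le
        (by linarith only [hc0] : (0:ℝ) ≤ 2 * c)]
    have hb : u ^ 2 * (1 - c ^ 2) * (1 + c ^ 2) ≤ 2 * c ^ 2 := by
      nlinarith only [hI, mul_nonneg (mul_nonneg (sq_nonneg u) (sq_nonneg c))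
        (by positivity : (0:ℝ) ≤ 6 + 2 * c ^ 2)]
    have hu2' : u * (1 - c ^ 2) ≤ 2 * c := by
      refine le_of_pow_le_pow_left₀ two_ne_zero (by linarith only [hc0] : (0:ℝ) ≤ 2 * c) ?_
      nlinarith only [hb, mul_nonneg (mul_nonneg (sq_nonneg u) hs0) (sq_nonneg c),
        sq_nonneg c]
    rw [ge_iff_le, div_mul_eq_mul_div, le_div_iff₀ h1p]
    nlinarith only [mul_le_mul_of_nonneg_left ha h2uc,
      mul_nonneg (mul_nonneg hs0 hu0.le) (sub_nonneg.2 hu2')]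
  · -- L2 ≥ R2
    have e6 : u ^ 2 * (1 - c ^ 2) ^ 2 = q * (1 - q) * (1 - c ^ 2) ^ 2 := by rw [hu2q]
    rw [ge_iff_le, div_mul_eq_mul_div, le_div_iff₀ h1p]
    nlinarith only [e6, mul_nonneg hs0 (sq_nonneg (1 - q * (1 - c ^ 2))),
      mul_nonneg (mul_nonneg (mul_nonneg hq0.le (sq_nonneg (1 - c))) (sq_nonneg (1 + c)))
        h1q.le]
end

section
/- The gain function G(q₁, c) = P_opt − P_sep, viewed as a function of q₁ ∈ (0,1) and c = cos θ ∈ (0,1), attains the value 1/4 at q₁ = 1/2, c = 1/2 (i.e., θ = π/3), and G(q₁,c) ≤ 1/4 for all q₁, c in the parameter region where both branch conditions (∗) and (∗∗) hold. -/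
/-- In the parameter region where both branch conditions (∗) and (∗∗) hold, the
gain `G(q₁,c) = P_opt − P_sep` is at most `1/4`, and this value is attained at
`q₁ = 1/2`, `c = cos(π/3) = 1/2`. -/
theorem gain_le_quarter :
    ((1 - 2 * Real.sqrt ((((1:ℝ)/2) ^ 2 + (1 - (1:ℝ)/2) ^ 2) *
          (2 * ((1:ℝ)/2) * (1 - (1:ℝ)/2))) * ((1:ℝ)/2)) -
        (1 - 2 * Real.sqrt (((1:ℝ)/2) * (1 - (1:ℝ)/2)) * ((1:ℝ)/2)) ^ 2 =
      1 / 4) ∧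
    ∀ q₁ c : ℝ, 0 < q₁ → q₁ < 1 → 0 < c → c < 1 →
      c < Real.sqrt ((q₁ ^ 2 + (1 - q₁) ^ 2) / (2 * q₁ * (1 - q₁))) *
          (1 - Real.sqrt (((q₁ ^ 2 + (1 - q₁) ^ 2) - 2 * q₁ * (1 - q₁)) /
            (q₁ ^ 2 + (1 - q₁) ^ 2))) →
      c < Real.sqrt ((1 - max q₁ (1 - q₁)) / max q₁ (1 - q₁)) →
      (1 - 2 * Real.sqrt ((q₁ ^ 2 + (1 - q₁) ^ 2) * (2 * q₁ * (1 - q₁))) * c) -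
          (1 - 2 * Real.sqrt (q₁ * (1 - q₁)) * c) ^ 2 ≤ 1 / 4 := by
  constructor
  · have h1 : ((((1:ℝ)/2) ^ 2 + (1 - (1:ℝ)/2) ^ 2) *
        (2 * ((1:ℝ)/2) * (1 - (1:ℝ)/2))) = (1/2)^2 := by norm_num
    have h2 : (((1:ℝ)/2) * (1 - (1:ℝ)/2)) = (1/2)^2 := by norm_num
    rw [h1, h2, Real.sqrt_sq (by norm_num : (0:ℝ) ≤ 1/2)]
    norm_num
  · intro q c hq0 hq1 hc0 hc1 _ _
    set A := Real.sqrt ((q ^ 2 + (1 - q) ^ 2) * (2 * q * (1 - q))) with hA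
    set B := Real.sqrt (q * (1 - q)) with hB
    have hB0 : 0 ≤ B := Real.sqrt_nonneg _
    have hAB : B ≤ A := by
      apply Real.sqrt_le_sqrt
      nlinarith [sq_nonneg (2*q - 1), mul_pos hq0 (by linarith : (0:ℝ) < 1 - q)]
    nlinarith [sq_nonneg (1 - 4 * B * c), mul_pos hc0 hc0, mul_le_mul_of_nonneg_right hAB hc0.le]
end

section
/- Let π₁,…,π_N be density matrices, suppose supp(πᵢ) ⊆ Σ_{k≠i} supp(π_k) for some i, and let C ≥ 2. Define ρ_b as (any positive multiple of) Σ over tuples (i₁,…,i_C) not all equal of π_{i₁}⊗⋯⊗π_{i_C}. Then any positive semidefinite operator F_a on H^{⊗C} with tr(F_a ρ_b) = 0 satisfies tr(F_a πᵢ^{⊗C}) = 0. -/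
/-!
Each term `tr (F_a · π_{f 0} ⊗ ⋯ ⊗ π_{f (C-1)})` of `tr (F_a ρ_b)` is nonnegative, and for
positive semidefinite matrices `tr (A B) = 0` forces `A B = 0`; so `F_a` annihilates every
non-constant tensor product. For `C ≥ 2`, putting `π_k` (`k ≠ i`) into one slot of `πᵢ^{⊗C}`
gives such a product. Fix vectors of `supp πᵢ` in the other slots: the vectors which, put into
the remaining slot, give an elementary tensor killed by `F_a` form a subspace containing every
`supp π_k`, hence `supp πᵢ`. Elementary tensors span, so `F_a πᵢ^{⊗C} = 0`.
-/

open scoped ComplexOrder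

/-- The `C`-fold tensor product `π_{f 0} ⊗ ⋯ ⊗ π_{f (C-1)}`, realized as a matrix
acting on `(ℂ^d)^{⊗C} ≅ ℂ^(Fin C → Fin d)`. -/
noncomputable def tensorPow {d N C : ℕ} (π : Fin N → Matrix (Fin d) (Fin d) ℂ)
    (f : Fin C → Fin N) : Matrix (Fin C → Fin d) (Fin C → Fin d) ℂ :=
  fun x y => ∏ t, π (f t) (x t) (y t)

open Matrix

namespace Matrix

section PosSemidef

variable {n 𝕜 : Type*} [Fintype n] [RCLike 𝕜]

theorem PosSemidef.exists_eq_conjTranspose_mul_self [DecidableEq n] {A : Matrix n n 𝕜}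
    (hA : A.PosSemidef) : ∃ P : Matrix n n 𝕜, A = Pᴴ * P := by
  open scoped MatrixOrder in exact CStarAlgebra.nonneg_iff_eq_star_mul_self.mp hA.nonneg

theorem trace_conjTranspose_mul_self_mul_conjTranspose_mul_self {m : Type*} [Fintype m]
    (P Q : Matrix m n 𝕜) : (Pᴴ * P * (Qᴴ * Q)).trace = ((P * Qᴴ)ᴴ * (P * Qᴴ)).trace := by
  rw [conjTranspose_mul, conjTranspose_conjTranspose, Matrix.mul_assoc Q, trace_mul_comm Q]
  simp only [Matrix.mul_assoc]

theorem PosSemidef.trace_mul_nonneg [DecidableEq n] {A B : Matrix n n 𝕜} (hA : A.PosSemidef)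
    (hB : B.PosSemidef) : 0 ≤ (A * B).trace := by
  obtain ⟨P, rfl⟩ := hA.exists_eq_conjTranspose_mul_self
  obtain ⟨Q, rfl⟩ := hB.exists_eq_conjTranspose_mul_self
  rw [trace_conjTranspose_mul_self_mul_conjTranspose_mul_self]
  exact (posSemidef_conjTranspose_mul_self _).trace_nonneg

theorem PosSemidef.trace_mul_eq_zero_iff [DecidableEq n] {A B : Matrix n n 𝕜}
    (hA : A.PosSemidef) (hB : B.PosSemidef) : (A * B).trace = 0 ↔ A * B = 0 := by
  refine ⟨fun h => ?_, fun h => by rw [h, trace_zero]⟩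
  obtain ⟨P, rfl⟩ := hA.exists_eq_conjTranspose_mul_self
  obtain ⟨Q, rfl⟩ := hB.exists_eq_conjTranspose_mul_self
  rw [trace_conjTranspose_mul_self_mul_conjTranspose_mul_self,
    trace_conjTranspose_mul_self_eq_zero_iff] at h
  rw [Matrix.mul_assoc, ← Matrix.mul_assoc P, h, Matrix.zero_mul, Matrix.mul_zero]

end PosSemidef

variable {ι R 𝕜 : Type*} [Fintype ι] {l : Type*} {m n : ι → Type*}

section piKronecker

def piKronecker [CommMonoid R] (A : ∀ t, Matrix (m t) (n t) R) :
    Matrix (∀ t, m t) (∀ t, n t) R :=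
  of fun x y => ∏ t, A t (x t) (y t)

@[simp]
theorem piKronecker_apply [CommMonoid R] (A : ∀ t, Matrix (m t) (n t) R) (x : ∀ t, m t)
    (y : ∀ t, n t) : piKronecker A x y = ∏ t, A t (x t) (y t) :=
  rfl

theorem piKronecker_mul [CommSemiring R] [DecidableEq ι] [∀ t, Fintype (n t)]
    {p : ι → Type*} (A : ∀ t, Matrix (m t) (n t) R) (B : ∀ t, Matrix (n t) (p t) R) :
    piKronecker A * piKronecker B = piKronecker fun t => A t * B t := by
  ext x z
  simp only [mul_apply, piKronecker_apply, Fintype.prod_sum, Finset.prod_mul_distrib]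

theorem conjTranspose_piKronecker [CommMonoid R] [StarMul R]
    (A : ∀ t, Matrix (m t) (n t) R) :
    (piKronecker A)ᴴ = piKronecker fun t => (A t)ᴴ := by
  ext x y
  simp [star_prod]

theorem PosSemidef.piKronecker [RCLike 𝕜] [DecidableEq ι] [∀ t, Fintype (m t)]
    [∀ t, DecidableEq (m t)] {A : ∀ t, Matrix (m t) (m t) 𝕜} (hA : ∀ t, (A t).PosSemidef) :
    (Matrix.piKronecker A).PosSemidef := by
  choose B hB using fun t => (hA t).exists_eq_conjTranspose_mul_self
  rw [funext hB, ← piKronecker_mul, ← conjTranspose_piKronecker]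
  exact posSemidef_conjTranspose_mul_self _

end piKronecker

section tprodVec

variable (R m) in
def tprodVec [CommSemiring R] : MultilinearMap R (fun t => m t → R) ((∀ t, m t) → R) :=
  MultilinearMap.piFamily fun _ => MultilinearMap.mkPiAlgebra R ι R

@[simp]
theorem tprodVec_apply [CommSemiring R] (v : ∀ t, m t → R) (x : ∀ t, m t) :
    tprodVec R m v x = ∏ t, v t (x t) := by
  simp [tprodVec]

theorem tprodVec_single [CommSemiring R] [∀ t, DecidableEq (m t)] (x : ∀ t, m t) :
    tprodVec R m (fun t => Pi.single (x t) 1) = Pi.single x 1 := by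
  simp [tprodVec]

theorem piKronecker_mulVec_tprodVec [CommSemiring R] [DecidableEq ι] [∀ t, Fintype (n t)]
    (A : ∀ t, Matrix (m t) (n t) R) (v : ∀ t, n t → R) :
    piKronecker A *ᵥ tprodVec R n v = tprodVec R m fun t => A t *ᵥ v t := by
  ext x
  simp only [mulVec, dotProduct, piKronecker_apply, tprodVec_apply, Fintype.prod_sum,
    Finset.prod_mul_distrib]

theorem eq_zero_of_forall_mulVec_tprodVec_eq_zero [CommSemiring R] [DecidableEq ι]
    [∀ t, Fintype (n t)] [∀ t, DecidableEq (n t)] {M : Matrix l (∀ t, n t) R}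
    (h : ∀ v, M *ᵥ tprodVec R n v = 0) : M = 0 :=
  ext_of_mulVec_single fun x => by
    rw [← tprodVec_single, h, zero_mulVec]

theorem mul_piKronecker_eq_zero_of_range_le_iSup [CommSemiring R] [DecidableEq ι]
    [∀ t, Fintype (m t)] [∀ t, Fintype (n t)] [∀ t, DecidableEq (n t)] {κ : Type*}
    (F : Matrix l (∀ t, m t) R) (A : ∀ t, Matrix (m t) (n t) R) (t₀ : ι)
    (B : κ → Matrix (m t₀) (n t₀) R)
    (hrange : LinearMap.range (A t₀).mulVecLin ≤ ⨆ k, LinearMap.range (B k).mulVecLin)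
    (hB : ∀ k, F * piKronecker (Function.update A t₀ (B k)) = 0) :
    F * piKronecker A = 0 := by
  refine eq_zero_of_forall_mulVec_tprodVec_eq_zero fun v => ?_
  set w : ∀ t, m t → R := fun t => A t *ᵥ v t
  let K := (LinearMap.ker F.mulVecLin).comap ((tprodVec R m).toLinearMap w t₀)
  have hBK : ∀ k, LinearMap.range (B k).mulVecLin ≤ K := by
    rintro k _ ⟨z, rfl⟩
    have := congr_arg (· *ᵥ tprodVec R n (Function.update v t₀ z)) (hB k)
    rw [← mulVec_mulVec, piKronecker_mulVec_tprodVec, zero_mulVec,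
      funext (Function.apply_update₂ (fun _ => (· *ᵥ ·)) A v t₀ (B k) z)] at this
    simpa [K] using this
  have hw : w t₀ ∈ K := iSup_le hBK (hrange ⟨v t₀, rfl⟩)
  simpa [K, ← mulVec_mulVec, piKronecker_mulVec_tprodVec] using hw

end tprodVec

end Matrix

theorem tensorPow_eq_piKronecker {d N C : ℕ} (π : Fin N → Matrix (Fin d) (Fin d) ℂ)
    (f : Fin C → Fin N) : tensorPow π f = piKronecker fun t => π (f t) :=
  rfl

theorem no_unambiguous_comparison_of_dependent_support_general {d N C : ℕ} (hC : 2 ≤ C)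
    (π : Fin N → Matrix (Fin d) (Fin d) ℂ)
    (hpsd : ∀ i, (π i).PosSemidef)
    (i : Fin N)
    (hsupp : LinearMap.range (π i).mulVecLin ≤
        ⨆ k : {k : Fin N // k ≠ i}, LinearMap.range (π (k : Fin N)).mulVecLin)
    (c : ℝ) (hc : 0 < c)
    (ρb : Matrix (Fin C → Fin d) (Fin C → Fin d) ℂ)
    (hρb : ρb = (c : ℂ) •
        ∑ f ∈ Finset.univ.filter (fun f : Fin C → Fin N => ¬ ∀ s t, f s = f t),
          tensorPow π f)
    (Fa : Matrix (Fin C → Fin d) (Fin C → Fin d) ℂ) (hFa : Fa.PosSemidef)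
    (hzero : (Fa * ρb).trace = 0) :
    (Fa * tensorPow π (fun _ => i)).trace = 0 := by
  have hpsd_pow (f : Fin C → Fin N) : (tensorPow π f).PosSemidef :=
    .piKronecker fun t => hpsd (f t)
  have hkill : ∀ f : Fin C → Fin N, (¬ ∀ s t, f s = f t) → Fa * tensorPow π f = 0 := by
    rw [hρb, Matrix.mul_smul, trace_smul, Matrix.mul_sum, trace_sum, smul_eq_mul,
      mul_eq_zero, or_iff_right (by exact_mod_cast hc.ne'),
      Finset.sum_eq_zero_iff_of_nonneg fun f _ => hFa.trace_mul_nonneg (hpsd_pow f)] at hzero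
    exact fun f hf => (hFa.trace_mul_eq_zero_iff (hpsd_pow f)).1 (hzero f (by simpa using hf))
  have : Nontrivial (Fin C) := Fin.nontrivial_iff_two_le.mpr hC
  obtain ⟨t₀, t₁, ht⟩ := exists_pair_ne (Fin C)
  have hmixed (k : {k : Fin N // k ≠ i}) :
      Fa * piKronecker (Function.update (fun _ => π i) t₀ (π k)) = 0 := by
    rw [← funext (Function.apply_update (fun _ => π) (fun _ => i) t₀ k)]
    refine hkill _ fun h => k.2 ?_
    simpa [ht.symm] using h t₀ t₁
  rw [tensorPow_eq_piKronecker,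
    mul_piKronecker_eq_zero_of_range_le_iSup Fa _ t₀ _ hsupp hmixed, trace_zero]

/-- If `supp(πᵢ) ⊆ Σ_{k≠i} supp(π_k)` for some `i`, then any positive semidefinite
`F_a` with `tr(F_a ρ_b) = 0`, where `ρ_b` is a positive multiple of the sum of all
non-constant `C`-fold tensor products of the `π`'s, also satisfies
`tr(F_a πᵢ^{⊗C}) = 0`. -/
theorem no_unambiguous_comparison_of_dependent_support {d N C : ℕ} (hC : 2 ≤ C)
    (π : Fin N → Matrix (Fin d) (Fin d) ℂ)
    (hpsd : ∀ i, (π i).PosSemidef) (htr : ∀ i, (π i).trace = 1)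
    (i : Fin N)
    (hsupp : LinearMap.range (π i).mulVecLin ≤
        ⨆ k : {k : Fin N // k ≠ i}, LinearMap.range (π (k : Fin N)).mulVecLin)
    (c : ℝ) (hc : 0 < c)
    (ρb : Matrix (Fin C → Fin d) (Fin C → Fin d) ℂ)
    (hρb : ρb = (c : ℂ) •
        ∑ f ∈ Finset.univ.filter (fun f : Fin C → Fin N => ¬ ∀ s t, f s = f t),
          tensorPow π f)
    (Fa : Matrix (Fin C → Fin d) (Fin C → Fin d) ℂ) (hFa : Fa.PosSemidef)
    (hzero : (Fa * ρb).trace = 0) :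
    (Fa * tensorPow π (fun _ => i)).trace = 0 :=
  no_unambiguous_comparison_of_dependent_support_general hC π hpsd i hsupp c hc ρb hρb Fa hFa hzero
end
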